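/- Let p be an odd prime, e ≥ 1, and i, j ∈ {0, …, p^(e-1)-1}. Define s_{i,j} = b_j⁻¹ ∘ a^i ∘ b_j ∈ Sym(ℤ/p^eℤ), where a(x) = (p+1)x and b_j(x) = Σ_{m=0}^{x-1} (p+1)^(mj). Then s_{i,j} is a skew-morphism of ℤ/p^eℤ. -/

import Mathlib

/-!
Write `u = p + 1` and `s = b⁻¹ a^i b`, so that `b (s z) = u^i b z`, and
`b (x + y) = b x + u^(j x) b y` because the geometric sum of `u^j` over a full period `p^e`
vanishes. Applying `b` to both sides of `s (x + y) = s x + s^k y` turns the skew identity into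
`u^(i + j x) = u^(j s(x) + i k)`, i.e. into the congruence `j s(x) + i k ≡ i + j x` modulo
`p^(e-1)`, a multiple of the order of `u`. It is solvable in `k` as soon as
`p^t = gcd(i, p^(e-1))` divides `s(x) - x`. Reducing modulo `p^t`, where `u^i = 1`, gives
`b (s x) ≡ b x`; and `b` stays injective modulo `p^t`, since it commutes with reduction and is a
bijection modulo `p^e`.
-/

/-- A bijection `f` of `ℤ/nℤ` is a skew-morphism if `f 0 = 0` and there is a
power function `π` with `f (x+y) = f x + f^(π x) y` for all `x, y`. -/
def IsSkewMorphism {n : ℕ} (f : Equiv.Perm (ZMod n)) : Prop :=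
  f 0 = 0 ∧ ∃ π : ZMod n → ℤ, ∀ x y : ZMod n, f (x + y) = f x + (f ^ π x) y

open Finset

section GeomSum

variable {R : Type*} [CommRing R]

theorem geom_sum_range_add (w : R) (a c : ℕ) :
    ∑ m ∈ range (a + c), w ^ m = ∑ m ∈ range a, w ^ m + w ^ a * ∑ m ∈ range c, w ^ m := by
  simp only [sum_range_add, mul_sum, pow_add]

theorem geom_sum_range_mul (w : R) (L c : ℕ) :
    ∑ m ∈ range (L * c), w ^ m = (∑ m ∈ range L, w ^ m) * ∑ d ∈ range c, (w ^ L) ^ d := by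
  induction c with
  | zero => simp
  | succ c ih =>
    rw [Nat.mul_succ, geom_sum_range_add, ih, sum_range_succ, ← pow_mul]
    ring

theorem natCast_pow_dvd_geom_sum_range_pow {p : ℕ} {w : R} (hw : (p : R) ∣ w - 1) (k : ℕ) :
    (p : R) ^ k ∣ ∑ m ∈ range (p ^ k), w ^ m := by
  induction k with
  | zero => simp
  | succ k ih =>
    have hblock : (p : R) ∣ ∑ d ∈ range p, (w ^ p ^ k) ^ d := by
      simpa using dvd_geom_sum₂_self (hw.trans (sub_one_dvd_pow_sub_one w (p ^ k)))
    rw [pow_succ, pow_succ, geom_sum_range_mul]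
    exact mul_dvd_mul ih hblock

end GeomSum

theorem Nat.exists_add_mul_modEq_of_gcd_dvd {i N c c' : ℕ} [NeZero N]
    (h : (i.gcd N : ℤ) ∣ (c' : ℤ) - c) : ∃ k, c + i * k ≡ c' [MOD N] := by
  obtain ⟨q, hq⟩ := h
  refine ⟨((i.gcdA N * q : ℤ) : ZMod N).val, ?_⟩
  rw [← ZMod.natCast_eq_natCast_iff]
  push_cast
  rw [ZMod.natCast_zmod_val]
  have hbezout := congrArg (Int.cast : ℤ → ZMod N) (Nat.gcd_eq_gcd_ab i N)
  have hq' := congrArg (Int.cast : ℤ → ZMod N) hq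
  push_cast [ZMod.natCast_self] at hbezout hq'
  linear_combination -hq' - q * hbezout

theorem Equiv.Perm.pow_apply_eq_pow_mul {M : Type*} [Monoid M] {a : Perm M} {u : M}
    (ha : ∀ z, a z = u * z) (n : ℕ) (z : M) : (a ^ n) z = u ^ n * z := by
  induction n generalizing z with
  | zero => simp
  | succ n ih => rw [pow_succ, mul_apply, ih, ha, pow_succ, mul_assoc]

theorem Equiv.Perm.apply_conj_pow_apply {M : Type*} [Monoid M] {a b : Perm M} {u : M}
    (ha : ∀ z, a z = u * z) (k : ℕ) (z : M) : b (((b⁻¹ * a * b) ^ k) z) = u ^ k * b z := by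
  have hconj : (b⁻¹ * a * b) ^ k = b⁻¹ * a ^ k * b := by simpa using conj_pow (a := b⁻¹)
  rw [hconj, mul_apply, mul_apply, inv_def, Equiv.apply_symm_apply, pow_apply_eq_pow_mul ha]

namespace ZMod

theorem natCast_add_one_pow_pow_eq_one {p k n : ℕ} (hn : n ∣ p ^ (k + 1)) :
    ((p : ZMod n) + 1) ^ p ^ k = 1 := by
  have h := dvd_sub_pow_of_dvd_sub (p := p) (a := (p : ZMod n) + 1) (b := 1) (by simp) k
  rwa [← Nat.cast_pow, (natCast_eq_zero_iff _ _).mpr hn, zero_dvd_iff, one_pow, sub_eq_zero] at h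

theorem sum_range_natCast_add_one_pow_pow_eq_zero (p j k : ℕ) :
    ∑ m ∈ range (p ^ k), (((p : ZMod (p ^ k)) + 1) ^ j) ^ m = 0 := by
  have hw : (p : ZMod (p ^ k)) ∣ ((p : ZMod (p ^ k)) + 1) ^ j - 1 := by
    simpa using sub_one_dvd_pow_sub_one ((p : ZMod (p ^ k)) + 1) j
  simpa [← Nat.cast_pow] using natCast_pow_dvd_geom_sum_range_pow hw k

/-- The paper's `b_j` on `ℤ/p^eℤ` is `geomSum ((p + 1) ^ j)`. -/
def geomSum {n : ℕ} (w : ZMod n) (x : ZMod n) : ZMod n :=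
  ∑ m ∈ range x.val, w ^ m

variable {n : ℕ} {w : ZMod n}

@[simp]
theorem geomSum_zero : geomSum w 0 = 0 := by
  simp [geomSum]

theorem geomSum_natCast (hw : ∑ m ∈ range n, w ^ m = 0) (a : ℕ) :
    geomSum w a = ∑ m ∈ range a, w ^ m := by
  have hper : Function.Periodic (fun a => ∑ m ∈ range a, w ^ m) n := fun a => by
    simp only [geom_sum_range_add, hw, mul_zero, add_zero]
  rw [geomSum, val_natCast]
  exact hper.map_mod_nat a

theorem geomSum_add [NeZero n] (hw : ∑ m ∈ range n, w ^ m = 0) (x y : ZMod n) :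
    geomSum w (x + y) = geomSum w x + w ^ x.val * geomSum w y := by
  conv_lhs => rw [← natCast_zmod_val x, ← natCast_zmod_val y, ← Nat.cast_add, geomSum_natCast hw,
    geom_sum_range_add]
  rfl

theorem castHom_geomSum [NeZero n] {m : ℕ} (hmn : m ∣ n)
    (hw : ∑ k ∈ range m, castHom hmn (ZMod m) w ^ k = 0) (x : ZMod n) :
    castHom hmn (ZMod m) (geomSum w x) =
      geomSum (castHom hmn (ZMod m) w) (castHom hmn (ZMod m) x) := by
  rw [castHom_apply x, cast_eq_val, geomSum_natCast hw, geomSum]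
  simp only [map_sum, map_pow]

theorem val_modEq_of_castHom_geomSum_eq [NeZero n] {m : ℕ} [NeZero m] (hmn : m ∣ n)
    (hsurj : Function.Surjective (geomSum w))
    (hw : ∑ k ∈ range m, castHom hmn (ZMod m) w ^ k = 0) {x y : ZMod n}
    (hxy : castHom hmn (ZMod m) (geomSum w x) = castHom hmn (ZMod m) (geomSum w y)) :
    x.val ≡ y.val [MOD m] := by
  set r := castHom hmn (ZMod m)
  have hcomm : r ∘ geomSum w = geomSum (r w) ∘ r := funext (castHom_geomSum hmn hw)
  have hinj : Function.Injective (geomSum (r w)) :=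
    Finite.injective_iff_surjective.mpr
      (Function.Surjective.of_comp (hcomm ▸ (ringHom_surjective r).comp hsurj))
  rw [castHom_geomSum hmn hw, castHom_geomSum hmn hw] at hxy
  have hrxy := hinj hxy
  rwa [castHom_apply, castHom_apply, cast_eq_val, cast_eq_val, natCast_eq_natCast_iff] at hrxy

end ZMod

section BijectiveGeomSum

variable {p e j : ℕ} {b : Equiv.Perm (ZMod (p ^ e))}

theorem val_modEq_of_apply_eq_pow_mul [NeZero p]
    (hb : ⇑b = ZMod.geomSum (((p : ZMod (p ^ e)) + 1) ^ j))
    {t i : ℕ} (hte : t ≤ e) (hti : p ^ t ∣ i) {x y : ZMod (p ^ e)}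
    (hxy : b y = ((p : ZMod (p ^ e)) + 1) ^ i * b x) : y.val ≡ x.val [MOD p ^ t] := by
  have hpt : p ^ t ∣ p ^ e := pow_dvd_pow p hte
  refine ZMod.val_modEq_of_castHom_geomSum_eq hpt (hb ▸ b.surjective) ?_ ?_
  · simpa only [map_pow, map_add, map_natCast, map_one] using
      ZMod.sum_range_natCast_add_one_pow_pow_eq_zero p j t
  · have hui : ((p : ZMod (p ^ t)) + 1) ^ i = 1 := by
      obtain ⟨c, rfl⟩ := hti
      rw [pow_mul, ZMod.natCast_add_one_pow_pow_eq_one (pow_dvd_pow p t.le_succ), one_pow]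
    rw [← hb, hxy, map_mul, map_pow, map_add, map_natCast, map_one, hui, one_mul]

theorem exists_add_mul_modEq_of_apply_eq_pow_mul (hp : p.Prime)
    (hb : ⇑b = ZMod.geomSum (((p : ZMod (p ^ e)) + 1) ^ j))
    {i : ℕ} {x y : ZMod (p ^ e)} (hxy : b y = ((p : ZMod (p ^ e)) + 1) ^ i * b x) :
    ∃ k, j * y.val + i * k ≡ i + j * x.val [MOD p ^ (e - 1)] := by
  have : NeZero p := ⟨hp.ne_zero⟩
  obtain ⟨t, hte, hgcd⟩ := (Nat.dvd_prime_pow hp).mp (Nat.gcd_dvd_right i (p ^ (e - 1)))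
  have hti : p ^ t ∣ i := hgcd ▸ Nat.gcd_dvd_left i (p ^ (e - 1))
  have hyx := val_modEq_of_apply_eq_pow_mul hb (by omega) hti hxy
  apply Nat.exists_add_mul_modEq_of_gcd_dvd
  have hdiff : ((i + j * x.val : ℕ) : ℤ) - (j * y.val : ℕ) = i + j * (x.val - y.val) := by
    push_cast
    ring
  rw [hgcd, hdiff]
  exact dvd_add (Int.natCast_dvd_natCast.mpr hti) ((Nat.modEq_iff_dvd.mp hyx).mul_left j)

end BijectiveGeomSum

theorem stmt_10_general (p e : ℕ) (hp : p.Prime)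
    (i j : ℕ)
    (a : Equiv.Perm (ZMod (p ^ e))) (ha : ∀ w : ZMod (p ^ e), a w = (p + 1) * w)
    (b : Equiv.Perm (ZMod (p ^ e)))
    (hb : ∀ x : ZMod (p ^ e),
      b x = ∑ m ∈ Finset.range x.val, ((p : ZMod (p ^ e)) + 1) ^ (m * j)) :
    IsSkewMorphism (b⁻¹ * a ^ i * b) := by
  have : NeZero p := ⟨hp.ne_zero⟩
  set u : ZMod (p ^ e) := (p : ZMod (p ^ e)) + 1
  have hbw : ⇑b = ZMod.geomSum (u ^ j) :=
    funext fun x => by simp only [hb, ZMod.geomSum, ← pow_mul']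
  have hb_add (x y : ZMod (p ^ e)) : b (x + y) = b x + (u ^ j) ^ x.val * b y := by
    simpa only [hbw] using
      ZMod.geomSum_add (ZMod.sum_range_natCast_add_one_pow_pow_eq_zero p j e) x y
  have hu : u ^ p ^ (e - 1) = 1 := ZMod.natCast_add_one_pow_pow_eq_one (pow_dvd_pow p (by omega))
  have hs := Equiv.Perm.apply_conj_pow_apply (b := b) (Equiv.Perm.pow_apply_eq_pow_mul ha i)
  have hs1 (z : ZMod (p ^ e)) : b ((b⁻¹ * a ^ i * b) z) = u ^ i * b z := by simpa using hs 1 z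
  refine ⟨b.injective (by rw [hs1, hbw, ZMod.geomSum_zero, mul_zero]), ?_⟩
  choose k hk using fun x => exists_add_mul_modEq_of_apply_eq_pow_mul hp hbw (hs1 x)
  refine ⟨fun x => k x, fun x y => b.injective ?_⟩
  have hexp : u ^ (j * ((b⁻¹ * a ^ i * b) x).val + i * k x) = u ^ (i + j * x.val) := by
    rw [pow_eq_pow_mod _ hu, hk x, ← pow_eq_pow_mod _ hu]
  rw [zpow_natCast, hs1, hb_add, hb_add, hs1, hs, mul_add, ← mul_assoc, ← mul_assoc, ← pow_mul,
    ← pow_mul, ← pow_mul, ← pow_add, ← pow_add, hexp]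

/-- `s_{i,j} = b_j⁻¹ ∘ a^i ∘ b_j` is a skew-morphism of `ℤ/p^eℤ`, where
`a x = (p+1) x` and `b_j x = Σ_{m < x} (p+1)^(m·j)`. -/
theorem stmt_10 (p e : ℕ) (hp : p.Prime) (hodd : Odd p) (he : 1 ≤ e)
    (i j : ℕ) (hi : i < p ^ (e - 1)) (hj : j < p ^ (e - 1))
    (a : Equiv.Perm (ZMod (p ^ e))) (ha : ∀ w : ZMod (p ^ e), a w = (p + 1) * w)
    (b : Equiv.Perm (ZMod (p ^ e)))
    (hb : ∀ x : ZMod (p ^ e),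
      b x = ∑ m ∈ Finset.range x.val, ((p : ZMod (p ^ e)) + 1) ^ (m * j)) :
    IsSkewMorphism (b⁻¹ * a ^ i * b) :=
  stmt_10_general p e hp i j a ha b hb
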